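/- arXiv:2412.15225 — 7 statements merged into one kernel-verified Lean document; each statement's English description precedes it below -/
import Mathlib

section
/- Let V be a finite-dimensional real vector space and R a finite set of vectors in V. Among all partitions of R into blocks whose spans form a direct sum decomposition of span(R), there is exactly one such partition that admits no proper refinement with the same direct-sum property (the finest independent decomposition). -/
/-- `P` is a partition of the set `R` of vectors whose blocks' spans form a direct sum
decomposition of `span R`. -/
def IsIndepPartition {V : Type*} [AddCommGroup V] [Module ℝ V]
    (R : Set V) (P : Set (Set V)) : Prop :=
  (∀ B ∈ P, B ⊆ R) ∧ (∅ ∉ P) ∧ (∀ x ∈ R, ∃! B, B ∈ P ∧ x ∈ B) ∧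
  iSupIndep (fun B : P => Submodule.span ℝ (B : Set V)) ∧
  Submodule.span ℝ R = ⨆ B : P, Submodule.span ℝ (B : Set V)

/-- `P` refines `Q`: every block of `P` is contained in some block of `Q`. -/
def PartitionRefines {V : Type*} (P Q : Set (Set V)) : Prop :=
  ∀ B ∈ P, ∃ C ∈ Q, B ⊆ C

open Submodule Module

section aux
variable {V : Type*} [AddCommGroup V] [Module ℝ V] [FiniteDimensional ℝ V]

-- subadditivity over a Finset
lemma aux_finrank_sup_le {ι : Type*} (W : ι → Submodule ℝ V) (s : Finset ι) :
    finrank ℝ (s.sup W : Submodule ℝ V) ≤ ∑ i ∈ s, finrank ℝ (W i) := by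
  classical
  induction s using Finset.induction_on with
  | empty => simp [finrank_bot]
  | insert _ _ h ih =>
    rename_i a s
    rw [Finset.sup_insert, Finset.sum_insert h]
    exact le_trans (Submodule.finrank_add_le_finrank_add_finrank _ _)
      (by omega)

lemma aux_finrank_sup_eq {ι : Type*} (W : ι → Submodule ℝ V)
    (hind : iSupIndep W) (s : Finset ι) :
    finrank ℝ (s.sup W : Submodule ℝ V) = ∑ i ∈ s, finrank ℝ (W i) := by
  classical
  induction s using Finset.induction_on with
  | empty => simp [finrank_bot]
  | insert _ _ h ih =>
    rename_i a s
    rw [Finset.sup_insert, Finset.sum_insert h, ← ih]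
    have hdisj : Disjoint (W a) (s.sup W) := by
      refine (hind a).mono_right ?_
      refine Finset.sup_le fun j hj => le_iSup₂ (f := fun j (_ : j ≠ a) => W j) j ?_
      rintro rfl; exact h hj
    have := Submodule.finrank_sup_add_finrank_inf_eq (W a) (s.sup W)
    rw [hdisj.eq_bot, finrank_bot, add_zero] at this
    omega

lemma aux_iSup_eq_sup_univ {ι : Type*} [Fintype ι] (W : ι → Submodule ℝ V) :
    (⨆ i, W i) = Finset.univ.sup W := by
  simp [Finset.sup_univ_eq_iSup]

lemma aux_finrank_iSup_eq {ι : Type*} [Fintype ι] (W : ι → Submodule ℝ V)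
    (hind : iSupIndep W) :
    finrank ℝ (⨆ i, W i : Submodule ℝ V) = ∑ i, finrank ℝ (W i) := by
  rw [aux_iSup_eq_sup_univ]; exact aux_finrank_sup_eq W hind _

-- converse: rank additivity implies independence
lemma aux_indep_of_finrank {ι : Type*} [Fintype ι] (W : ι → Submodule ℝ V)
    (h : finrank ℝ (⨆ i, W i : Submodule ℝ V) = ∑ i, finrank ℝ (W i)) :
    iSupIndep W := by
  classical
  intro i
  have hsplit : (⨆ j, W j) = W i ⊔ ⨆ j ≠ i, W j := by
    refine le_antisymm (iSup_le fun j => ?_) ?_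
    · by_cases hji : j = i
      · subst hji; exact le_sup_left
      · exact le_sup_of_le_right (le_iSup₂ (f := fun j (_ : j ≠ i) => W j) j hji)
    · refine sup_le (le_iSup W i) (iSup₂_le fun j _ => le_iSup W j)
  have hrest : finrank ℝ (⨆ j ≠ i, W j : Submodule ℝ V) ≤ ∑ j ∈ Finset.univ.erase i, finrank ℝ (W j) := by
    have : (⨆ j ≠ i, W j) = (Finset.univ.erase i).sup W := by
      refine le_antisymm (iSup₂_le fun j hj => Finset.le_sup (by simp [hj])) ?_
      refine Finset.sup_le fun j hj => ?_
      exact le_iSup₂ (f := fun j (_ : j ≠ i) => W j) j (Finset.ne_of_mem_erase hj)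
    rw [this]; exact aux_finrank_sup_le W _
  have hkey := Submodule.finrank_sup_add_finrank_inf_eq (W i) (⨆ j ≠ i, W j)
  rw [← hsplit] at hkey
  have hsum : ∑ j, finrank ℝ (W j) = finrank ℝ (W i) + ∑ j ∈ Finset.univ.erase i, finrank ℝ (W j) := by
    rw [← Finset.sum_erase_add _ _ (Finset.mem_univ i)]; ring
  have hzero : finrank ℝ (W i ⊓ ⨆ j ≠ i, W j : Submodule ℝ V) = 0 := by omega
  rw [disjoint_iff]
  exact Submodule.finrank_eq_zero.mp hzero

end aux

section main
variable {V : Type*} [AddCommGroup V] [Module ℝ V] [FiniteDimensional ℝ V]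
variable {R : Set V}

lemma partition_finite (hR : R.Finite) {P : Set (Set V)} (hP : IsIndepPartition R P) :
    P.Finite :=
  (Set.Finite.finite_subsets hR).subset (fun B hB => hP.1 B hB)

lemma restrict_iUnion {Q : Set (Set V)} (hQ : IsIndepPartition R Q) {X : Set V} (hX : X ⊆ R) :
    ⋃ C : Q, (X ∩ (C : Set V)) = X := by
  ext x
  simp only [Set.mem_iUnion, Set.mem_inter_iff]
  constructor
  · rintro ⟨C, hx, _⟩; exact hx
  · intro hx
    obtain ⟨C, ⟨hCQ, hxC⟩, -⟩ := hQ.2.2.1 x (hX hx)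
    exact ⟨⟨C, hCQ⟩, hx, hxC⟩

lemma restrict_indep {Q : Set (Set V)} (hQ : IsIndepPartition R Q) (X : Set V) :
    iSupIndep (fun C : Q => Submodule.span ℝ (X ∩ (C : Set V))) :=
  hQ.2.2.2.1.mono fun C => Submodule.span_mono Set.inter_subset_right

lemma restrict_finrank {Q : Set (Set V)} [Fintype Q] (hQ : IsIndepPartition R Q)
    {X : Set V} (hX : X ⊆ R) :
    finrank ℝ (Submodule.span ℝ X) = ∑ C : Q, finrank ℝ (Submodule.span ℝ (X ∩ (C : Set V))) := by
  rw [← aux_finrank_iSup_eq _ (restrict_indep hQ X), ← Submodule.span_iUnion,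
    restrict_iUnion hQ hX]

lemma blocks_finrank {Q : Set (Set V)} [Fintype Q] (hQ : IsIndepPartition R Q) :
    finrank ℝ (Submodule.span ℝ R) = ∑ C : Q, finrank ℝ (Submodule.span ℝ (C : Set V)) := by
  rw [hQ.2.2.2.2, aux_finrank_iSup_eq _ hQ.2.2.2.1]


lemma refines_eq (hR : R.Finite) {P Q : Set (Set V)} (hP : IsIndepPartition R P)
    (hQ : IsIndepPartition R Q) (href : PartitionRefines Q P) (hcard : Q.ncard ≤ P.ncard) :
    Q = P := by
  classical
  haveI : Fintype Q := (partition_finite hR hQ).fintype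
  haveI : Fintype P := (partition_finite hR hP).fintype
  have hchoice : ∀ B : Q, ∃ C : P, (B : Set V) ⊆ (C : Set V) := by
    intro B
    obtain ⟨C, hC, hBC⟩ := href B B.2
    exact ⟨⟨C, hC⟩, hBC⟩
  choose f hf using hchoice
  have huniq : ∀ x ∈ R, ∀ C C' : P, x ∈ (C : Set V) → x ∈ (C' : Set V) → C = C' := by
    intro x hx C C' h1 h2
    obtain ⟨D, -, hD⟩ := hP.2.2.1 x hx
    exact Subtype.ext ((hD C ⟨C.2, h1⟩).trans (hD C' ⟨C'.2, h2⟩).symm)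
  have hsurj : Function.Surjective f := by
    intro C
    have hCne : (C : Set V).Nonempty :=
      Set.nonempty_iff_ne_empty.2 (fun h => hP.2.1 (h ▸ C.2))
    obtain ⟨x, hx⟩ := hCne
    have hxR : x ∈ R := hP.1 C C.2 hx
    obtain ⟨B, ⟨hBQ, hxB⟩, -⟩ := hQ.2.2.1 x hxR
    exact ⟨⟨B, hBQ⟩, huniq x hxR _ C (hf ⟨B, hBQ⟩ hxB) hx⟩
  have hcards : Fintype.card P = Fintype.card Q := by
    have h1 : Fintype.card P ≤ Fintype.card Q := Fintype.card_le_of_surjective f hsurj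
    have h2 : Fintype.card Q ≤ Fintype.card P := by
      rw [← Nat.card_eq_fintype_card, ← Nat.card_eq_fintype_card,
        Nat.card_coe_set_eq, Nat.card_coe_set_eq]
      exact hcard
    omega
  have hinj : Function.Injective f :=
    ((Fintype.bijective_iff_surjective_and_card f).2 ⟨hsurj, hcards.symm⟩).1
  have hblock : ∀ B : Q, (B : Set V) = (f B : Set V) := by
    intro B
    refine Set.Subset.antisymm (hf B) ?_
    intro x hx
    have hxR : x ∈ R := hP.1 _ (f B).2 hx
    obtain ⟨B', hB'Q, hxB'⟩ := (hQ.2.2.1 x hxR).exists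
    have h1 : f ⟨B', hB'Q⟩ = f B := huniq x hxR _ _ (hf ⟨B', hB'Q⟩ hxB') hx
    have h2 : (⟨B', hB'Q⟩ : Q) = B := hinj h1
    have : B' = (B : Set V) := congrArg Subtype.val h2
    exact this ▸ hxB'
  ext D
  constructor
  · intro hD
    have := hblock ⟨D, hD⟩
    simp only [Subtype.coe_mk] at this
    rw [this]
    exact (f ⟨D, hD⟩).2
  · intro hD
    obtain ⟨B, hB⟩ := hsurj ⟨D, hD⟩
    have : (B : Set V) = D := by rw [hblock B, hB]
    exact this ▸ B.2


def commonRef (P Q : Set (Set V)) : Set (Set V) :=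
  {A | A ≠ ∅ ∧ ∃ B ∈ P, ∃ C ∈ Q, A = B ∩ C}

lemma commonRef_refines_left {P Q : Set (Set V)} :
    PartitionRefines (commonRef P Q) P := by
  rintro A ⟨-, B, hB, C, hC, rfl⟩
  exact ⟨B, hB, Set.inter_subset_left⟩

lemma commonRef_refines_right {P Q : Set (Set V)} :
    PartitionRefines (commonRef P Q) Q := by
  rintro A ⟨-, B, hB, C, hC, rfl⟩
  exact ⟨C, hC, Set.inter_subset_right⟩

lemma commonRef_iUnion_pairs {P Q : Set (Set V)}
    (hP : IsIndepPartition R P) (hQ : IsIndepPartition R Q) :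
    ⋃ p : P × Q, ((p.1 : Set V) ∩ (p.2 : Set V)) = R := by
  ext x
  simp only [Set.mem_iUnion, Set.mem_inter_iff]
  constructor
  · rintro ⟨⟨B, C⟩, hxB, -⟩
    exact hP.1 B B.2 hxB
  · intro hx
    obtain ⟨B, hBP, hxB⟩ := (hP.2.2.1 x hx).exists
    obtain ⟨C, hCQ, hxC⟩ := (hQ.2.2.1 x hx).exists
    exact ⟨⟨⟨B, hBP⟩, ⟨C, hCQ⟩⟩, hxB, hxC⟩

lemma commonRef_pair_indep (hR : R.Finite) {P Q : Set (Set V)}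
    (hP : IsIndepPartition R P) (hQ : IsIndepPartition R Q) :
    iSupIndep (fun p : P × Q => Submodule.span ℝ ((p.1 : Set V) ∩ (p.2 : Set V))) := by
  classical
  haveI : Fintype P := (partition_finite hR hP).fintype
  haveI : Fintype Q := (partition_finite hR hQ).fintype
  apply aux_indep_of_finrank
  have hsup : (⨆ p : P × Q, Submodule.span ℝ ((p.1 : Set V) ∩ (p.2 : Set V)))
      = Submodule.span ℝ R := by
    rw [← Submodule.span_iUnion, commonRef_iUnion_pairs hP hQ]
  rw [hsup]
  rw [Fintype.sum_prod_type]
  rw [blocks_finrank hP]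
  refine Finset.sum_congr rfl fun B _ => ?_
  exact restrict_finrank hQ (hP.1 B B.2)

lemma commonRef_isIndep (hR : R.Finite) {P Q : Set (Set V)}
    (hP : IsIndepPartition R P) (hQ : IsIndepPartition R Q) :
    IsIndepPartition R (commonRef P Q) := by
  classical
  set M := commonRef P Q with hM
  have hMsub : ∀ A ∈ M, A ⊆ R := by
    rintro A ⟨-, B, hB, C, hC, rfl⟩
    exact fun x hx => hP.1 B hB hx.1
  have hMU : ⋃ A : M, (A : Set V) = R := by
    apply Set.Subset.antisymm
    · exact Set.iUnion_subset fun A => hMsub A A.2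
    · intro x hx
      obtain ⟨B, hBP, hxB⟩ := (hP.2.2.1 x hx).exists
      obtain ⟨C, hCQ, hxC⟩ := (hQ.2.2.1 x hx).exists
      have hABC : B ∩ C ∈ M := by
        refine ⟨fun h => ?_, B, hBP, C, hCQ, rfl⟩
        exact absurd (h ▸ (Set.mem_inter hxB hxC)) (Set.notMem_empty x)
      exact Set.mem_iUnion.2 ⟨⟨_, hABC⟩, hxB, hxC⟩
  -- choose the pair for each block
  have hchoice : ∀ A : M, ∃ B ∈ P, ∃ C ∈ Q, (A : Set V) = B ∩ C := fun A => A.2.2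
  choose Bf hBf Cf hCf hAf using hchoice
  have hg : Function.Injective (fun A : M => ((⟨Bf A, hBf A⟩, ⟨Cf A, hCf A⟩) : P × Q)) := by
    intro A A' h
    have h1 : Bf A = Bf A' := congrArg (fun p => (p.1 : Set V)) h
    have h2 : Cf A = Cf A' := congrArg (fun p => (p.2 : Set V)) h
    apply Subtype.ext
    rw [hAf A, hAf A', h1, h2]
  have hindep : iSupIndep (fun A : M => Submodule.span ℝ (A : Set V)) := by
    have := (commonRef_pair_indep hR hP hQ).comp hg
    convert this using 1
    funext A
    simp only [Function.comp]
    rw [hAf A]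
  refine ⟨hMsub, ?_, ?_, hindep, ?_⟩
  · rintro ⟨h, -⟩; exact h rfl
  · intro x hx
    obtain ⟨B, hBP, hxB⟩ := (hP.2.2.1 x hx).exists
    obtain ⟨C, hCQ, hxC⟩ := (hQ.2.2.1 x hx).exists
    refine ⟨B ∩ C, ⟨⟨fun h => absurd (h ▸ (Set.mem_inter hxB hxC)) (Set.notMem_empty x),
      B, hBP, C, hCQ, rfl⟩, hxB, hxC⟩, ?_⟩
    rintro A ⟨⟨-, B', hB'P, C', hC'Q, rfl⟩, hxB', hxC'⟩
    obtain ⟨DB, -, hDB⟩ := hP.2.2.1 x hx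
    obtain ⟨DC, -, hDC⟩ := hQ.2.2.1 x hx
    rw [(hDB B' ⟨hB'P, hxB'⟩).trans (hDB B ⟨hBP, hxB⟩).symm,
      (hDC C' ⟨hC'Q, hxC'⟩).trans (hDC C ⟨hCQ, hxC⟩).symm]
  · rw [← Submodule.span_iUnion, hMU]


lemma refines_ncard_le (hR : R.Finite) {P Q : Set (Set V)} (hP : IsIndepPartition R P)
    (hQ : IsIndepPartition R Q) (href : PartitionRefines Q P) : P.ncard ≤ Q.ncard := by
  classical
  haveI : Fintype Q := (partition_finite hR hQ).fintype
  haveI : Fintype P := (partition_finite hR hP).fintype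
  have hchoice : ∀ B : Q, ∃ C : P, (B : Set V) ⊆ (C : Set V) := by
    intro B
    obtain ⟨C, hC, hBC⟩ := href B B.2
    exact ⟨⟨C, hC⟩, hBC⟩
  choose f hf using hchoice
  have huniq : ∀ x ∈ R, ∀ C C' : P, x ∈ (C : Set V) → x ∈ (C' : Set V) → C = C' := by
    intro x hx C C' h1 h2
    obtain ⟨D, -, hD⟩ := hP.2.2.1 x hx
    exact Subtype.ext ((hD C ⟨C.2, h1⟩).trans (hD C' ⟨C'.2, h2⟩).symm)
  have hsurj : Function.Surjective f := by
    intro C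
    have hCne : (C : Set V).Nonempty :=
      Set.nonempty_iff_ne_empty.2 (fun h => hP.2.1 (h ▸ C.2))
    obtain ⟨x, hx⟩ := hCne
    have hxR : x ∈ R := hP.1 C C.2 hx
    obtain ⟨B, ⟨hBQ, hxB⟩, -⟩ := hQ.2.2.1 x hxR
    exact ⟨⟨B, hBQ⟩, huniq x hxR _ C (hf ⟨B, hBQ⟩ hxB) hx⟩
  rw [← Nat.card_coe_set_eq, ← Nat.card_coe_set_eq,
    Nat.card_eq_fintype_card, Nat.card_eq_fintype_card]
  exact Fintype.card_le_of_surjective f hsurj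

lemma exists_indepPartition (R : Set V) : ∃ P, IsIndepPartition R P := by
  rcases Set.eq_empty_or_nonempty R with rfl | ⟨x0, hx0⟩
  · refine ⟨∅, fun B hB => absurd hB (Set.notMem_empty B), Set.notMem_empty ∅,
      fun x hx => absurd hx (Set.notMem_empty x), fun i => isEmptyElim i, ?_⟩
    haveI : IsEmpty (↥(∅ : Set (Set V))) := Set.isEmpty_coe_sort.2 rfl
    rw [Submodule.span_empty]
    exact (iSup_of_empty _).symm
  · refine ⟨{R}, fun B hB => by rw [Set.mem_singleton_iff.mp hB],
      fun h => (Set.mem_singleton_iff.mp h) ▸ hx0 |>.elim, ?_, ?_, ?_⟩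
    · intro x hx
      exact ⟨R, ⟨rfl, hx⟩, fun B hB => hB.1⟩
    · intro i
      have : (⨆ j ≠ i, Submodule.span ℝ ((j : ↥({R} : Set (Set V))) : Set V)) = ⊥ := by
        refine le_bot_iff.mp (iSup₂_le fun j hj => absurd (Subsingleton.elim j i) hj)
      rw [this]
      exact disjoint_bot_right
    · refine le_antisymm ?_ (iSup_le fun B => Submodule.span_mono (by
        rw [Set.mem_singleton_iff.mp B.2]))
      exact le_iSup (fun B : ↥({R} : Set (Set V)) => Submodule.span ℝ (B : Set V))
        ⟨R, rfl⟩

end main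


/-- Among all independent partitions of a finite set `R` of vectors in a finite-dimensional
real vector space, there is exactly one admitting no proper independent refinement
(the finest independent decomposition). -/
theorem stmt_8 (V : Type*) [AddCommGroup V] [Module ℝ V] [FiniteDimensional ℝ V]
    (R : Set V) (hR : R.Finite) :
    ∃! P : Set (Set V), IsIndepPartition R P ∧
      ∀ Q : Set (Set V), IsIndepPartition R Q → PartitionRefines Q P → Q = P := by
  classical
  set 𝒞 : Set (Set (Set V)) := {P | IsIndepPartition R P} with h𝒞
  have h𝒞fin : 𝒞.Finite := by
    refine Set.Finite.subset (Set.Finite.finite_subsets (Set.Finite.finite_subsets hR)) ?_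
    intro P hP B hB
    exact (hP.1 B hB : B ⊆ R)
  have h𝒞ne : 𝒞.Nonempty := exists_indepPartition R
  obtain ⟨P, hP𝒞, hmax⟩ := Set.Finite.exists_maximalFor Set.ncard 𝒞 h𝒞fin h𝒞ne
  have hPmin : ∀ Q : Set (Set V), IsIndepPartition R Q → PartitionRefines Q P → Q = P := by
    intro Q hQ href
    have hle : P.ncard ≤ Q.ncard := refines_ncard_le hR hP𝒞 hQ href
    have heq : P.ncard = Q.ncard := le_antisymm hle (hmax hQ hle)
    exact refines_eq hR hP𝒞 hQ href (le_of_eq heq.symm)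
  refine ⟨P, ⟨hP𝒞, hPmin⟩, ?_⟩
  rintro P' ⟨hP', hP'min⟩
  have hM := commonRef_isIndep hR hP' hP𝒞
  have h1 : commonRef P' P = P' := hP'min _ hM commonRef_refines_left
  have h2 : commonRef P' P = P := hPmin _ hM commonRef_refines_right
  rw [← h1, h2]
end

section
/- For a decomposition of a reaction network into subnetworks N_1,...,N_k, the following are equivalent: (1) the decomposition is independent and δ = δ_1 + ... + δ_k; (2) the decomposition is incidence-independent and δ = δ_1 + ... + δ_k; (3) the decomposition is bi-independent (both independent and incidence-independent). -/
/-- Image of the incidence matrix of the subnetwork with reactions `{j | p j = i}`,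
where `c j ∈ ℝ^n` is the incidence column of reaction `j`. -/
def incImage {n r k : ℕ} (c : Fin r → (Fin n → ℝ)) (p : Fin r → Fin k) (i : Fin k) :
    Submodule ℝ (Fin n → ℝ) :=
  Submodule.span ℝ (c '' {j | p j = i})

/-- Stoichiometric subspace of the subnetwork: image of the incidence image under the
molecularity map `Y`. -/
def stoSub {m n r k : ℕ} (Y : Matrix (Fin m) (Fin n) ℝ) (c : Fin r → (Fin n → ℝ))
    (p : Fin r → Fin k) (i : Fin k) : Submodule ℝ (Fin m → ℝ) :=
  Submodule.map Y.mulVecLin (incImage c p i)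

/-- The decomposition is independent: the network stoichiometric subspace is the direct sum
of the subnetwork stoichiometric subspaces. -/
def IsIndepDecomp {m n r k : ℕ} (Y : Matrix (Fin m) (Fin n) ℝ) (c : Fin r → (Fin n → ℝ))
    (p : Fin r → Fin k) : Prop :=
  iSupIndep (stoSub Y c p) ∧
    (⨆ i, stoSub Y c p i) =
      Submodule.map Y.mulVecLin (Submodule.span ℝ (Set.range c))

/-- The decomposition is incidence-independent: the image of the network incidence matrix is
the direct sum of the images of the subnetwork incidence matrices. -/
def IsIncIndepDecomp {n r k : ℕ} (c : Fin r → (Fin n → ℝ)) (p : Fin r → Fin k) : Prop :=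
  iSupIndep (incImage c p) ∧
    (⨆ i, incImage c p i) = Submodule.span ℝ (Set.range c)

/-- Deficiency of the network: `dim (ker Y ⊓ Im Ia)`. -/
noncomputable def netDef {m n r : ℕ} (Y : Matrix (Fin m) (Fin n) ℝ) (c : Fin r → (Fin n → ℝ)) : ℕ :=
  Module.finrank ℝ
    (LinearMap.ker Y.mulVecLin ⊓ Submodule.span ℝ (Set.range c) : Submodule ℝ (Fin n → ℝ))

/-- Deficiency of the `i`-th subnetwork. -/
noncomputable def subDef {m n r k : ℕ} (Y : Matrix (Fin m) (Fin n) ℝ) (c : Fin r → (Fin n → ℝ))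
    (p : Fin r → Fin k) (i : Fin k) : ℕ :=
  Module.finrank ℝ
    (LinearMap.ker Y.mulVecLin ⊓ incImage c p i : Submodule ℝ (Fin n → ℝ))

open Module Submodule

variable {V V' : Type*} [AddCommGroup V] [Module ℝ V] [FiniteDimensional ℝ V]
  [AddCommGroup V'] [Module ℝ V']

/-- restricted rank-nullity -/
lemma my_rank_nullity (T : V →ₗ[ℝ] V') (W : Submodule ℝ V) :
    finrank ℝ (Submodule.map T W) + finrank ℝ (LinearMap.ker T ⊓ W : Submodule ℝ V)
      = finrank ℝ W := by
  have h := LinearMap.finrank_range_add_finrank_ker (T.domRestrict W)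
  rw [LinearMap.range_domRestrict, LinearMap.ker_domRestrict,
    ← Submodule.finrank_map_subtype_eq W ((LinearMap.ker T).comap W.subtype),
    Submodule.map_comap_subtype, inf_comm] at h
  exact h

lemma my_finrank_finset_sup_le {ι : Type*} [DecidableEq ι] (W : ι → Submodule ℝ V)
    (s : Finset ι) :
    finrank ℝ (s.sup W : Submodule ℝ V) ≤ ∑ i ∈ s, finrank ℝ (W i) := by
  induction s using Finset.induction_on with
  | empty => simp
  | insert _ _ ha ih =>
    rename_i a s
    rw [Finset.sup_insert, Finset.sum_insert ha]
    have h := Submodule.finrank_sup_add_finrank_inf_eq (W a) (s.sup W)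
    omega

lemma my_iSupIndep_iff_finrank {ι : Type*} [Fintype ι] [DecidableEq ι]
    (W : ι → Submodule ℝ V) :
    iSupIndep W ↔ finrank ℝ (⨆ i, W i : Submodule ℝ V) = ∑ i, finrank ℝ (W i) := by
  constructor
  · intro h
    have key : ∀ s : Finset ι, finrank ℝ (s.sup W : Submodule ℝ V) = ∑ i ∈ s, finrank ℝ (W i) := by
      intro s
      induction s using Finset.induction_on with
      | empty => simp
      | insert _ _ ha ih =>
        rename_i a s
        have hd : Disjoint (W a) (s.sup W) := by
          refine (h a).mono_right ?_
          rw [Finset.sup_eq_iSup]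
          exact iSup_le fun j => iSup_le fun hj =>
            le_iSup_of_le j (le_iSup (fun _ : j ≠ a => W j) (fun hja => ha (hja ▸ hj)))
        have heq := Submodule.finrank_sup_add_finrank_inf_eq (W a) (s.sup W)
        rw [hd.eq_bot, finrank_bot, add_zero] at heq
        rw [Finset.sup_insert, Finset.sum_insert ha, heq, ih]
    rw [← key Finset.univ, Finset.sup_univ_eq_iSup]
  · intro h i
    set B := ⨆ j, ⨆ (_ : j ≠ i), W j with hBdef
    have hB : B = ((Finset.univ.erase i).sup W : Submodule ℝ V) := by
      rw [Finset.sup_eq_iSup]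
      simp [Finset.mem_erase]
      exact hBdef
    have hsup : (⨆ j, W j) = W i ⊔ B := by
      apply le_antisymm
      · refine iSup_le fun j => ?_
        by_cases hj : j = i
        · subst hj; exact le_sup_left
        · exact le_trans (le_iSup_of_le j (le_iSup (fun _ : j ≠ i => W j) hj)) le_sup_right
      · exact sup_le (le_iSup W i) (iSup_le fun j => iSup_le fun _ => le_iSup W j)
    have h1 := Submodule.finrank_sup_add_finrank_inf_eq (W i) B
    have h2 : finrank ℝ (B : Submodule ℝ V) ≤ ∑ j ∈ Finset.univ.erase i, finrank ℝ (W j) := by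
      rw [hB]; exact my_finrank_finset_sup_le W _
    have h3 : ∑ j, finrank ℝ (W j)
        = finrank ℝ (W i) + ∑ j ∈ Finset.univ.erase i, finrank ℝ (W j) :=
      (Finset.add_sum_erase _ _ (Finset.mem_univ i)).symm
    rw [hsup] at h
    have h4 : finrank ℝ (W i ⊓ B : Submodule ℝ V) = 0 := by omega
    rw [disjoint_iff]
    exact Submodule.finrank_eq_zero.mp h4


section Helpers

variable {m n r k : ℕ}

lemma span_range_eq_iSup (c : Fin r → (Fin n → ℝ)) (p : Fin r → Fin k) :
    Submodule.span ℝ (Set.range c) = ⨆ i, incImage c p i := by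
  have hU : Set.range c = ⋃ i, c '' {j | p j = i} := by
    ext x
    simp only [Set.mem_iUnion, Set.mem_image, Set.mem_setOf_eq, Set.mem_range]
    constructor
    · rintro ⟨j, rfl⟩; exact ⟨p j, j, rfl, rfl⟩
    · rintro ⟨i, j, -, rfl⟩; exact ⟨j, rfl⟩
  rw [hU, Submodule.span_iUnion]
  rfl

lemma map_span_eq_iSup (Y : Matrix (Fin m) (Fin n) ℝ) (c : Fin r → (Fin n → ℝ))
    (p : Fin r → Fin k) :
    Submodule.map Y.mulVecLin (Submodule.span ℝ (Set.range c)) = ⨆ i, stoSub Y c p i := by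
  rw [span_range_eq_iSup c p, Submodule.map_iSup]
  rfl

end Helpers

/-- For a decomposition of a reaction network, the following are equivalent:
(1) independent with `δ = Σ δᵢ`; (2) incidence-independent with `δ = Σ δᵢ`;
(3) bi-independent. -/
theorem stmt_10 (m n r k : ℕ) (Y : Matrix (Fin m) (Fin n) ℝ)
    (c : Fin r → (Fin n → ℝ)) (p : Fin r → Fin k) :
    ((IsIndepDecomp Y c p ∧ netDef Y c = ∑ i, subDef Y c p i) ↔
      (IsIncIndepDecomp c p ∧ netDef Y c = ∑ i, subDef Y c p i)) ∧
    ((IsIndepDecomp Y c p ∧ netDef Y c = ∑ i, subDef Y c p i) ↔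
      (IsIndepDecomp Y c p ∧ IsIncIndepDecomp c p)) := by
  classical
  have hS := span_range_eq_iSup c p
  have hTS := map_span_eq_iSup Y c p
  -- rank-nullity for the whole network
  have h1 : Module.finrank ℝ (Submodule.map Y.mulVecLin (Submodule.span ℝ (Set.range c)))
      + netDef Y c
      = Module.finrank ℝ (Submodule.span ℝ (Set.range c) : Submodule ℝ (Fin n → ℝ)) :=
    my_rank_nullity Y.mulVecLin _
  -- rank-nullity for subnetworks, summed
  have h2 : (∑ i, Module.finrank ℝ (stoSub Y c p i)) + (∑ i, subDef Y c p i)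
      = ∑ i, Module.finrank ℝ (incImage c p i) := by
    rw [← Finset.sum_add_distrib]
    exact Finset.sum_congr rfl fun i _ => my_rank_nullity Y.mulVecLin (incImage c p i)
  -- subadditivity
  have h3 : Module.finrank ℝ (Submodule.span ℝ (Set.range c) : Submodule ℝ (Fin n → ℝ))
      ≤ ∑ i, Module.finrank ℝ (incImage c p i) := by
    rw [hS, ← Finset.sup_univ_eq_iSup]
    exact my_finrank_finset_sup_le _ _
  have h4 : Module.finrank ℝ (Submodule.map Y.mulVecLin (Submodule.span ℝ (Set.range c)))
      ≤ ∑ i, Module.finrank ℝ (stoSub Y c p i) := by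
    rw [hTS, ← Finset.sup_univ_eq_iSup]
    exact my_finrank_finset_sup_le _ _
  -- characterizations
  have hInc : IsIncIndepDecomp c p ↔
      Module.finrank ℝ (Submodule.span ℝ (Set.range c) : Submodule ℝ (Fin n → ℝ))
        = ∑ i, Module.finrank ℝ (incImage c p i) := by
    unfold IsIncIndepDecomp
    rw [and_iff_left hS.symm, my_iSupIndep_iff_finrank, ← hS]
  have hInd : IsIndepDecomp Y c p ↔
      Module.finrank ℝ (Submodule.map Y.mulVecLin (Submodule.span ℝ (Set.range c)))
        = ∑ i, Module.finrank ℝ (stoSub Y c p i) := by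
    unfold IsIndepDecomp
    rw [and_iff_left hTS.symm, my_iSupIndep_iff_finrank, ← hTS]
  rw [hInc, hInd]
  omega
end

section
/- If a decomposition of a reaction network is independent, then the deficiency of the network is at most the sum of the deficiencies of the subnetworks: δ ≤ δ_1 + ... + δ_k. -/
open Module Submodule

lemma rankNull {E F : Type*} [AddCommGroup E] [Module ℝ E] [AddCommGroup F] [Module ℝ F]
    (f : E →ₗ[ℝ] F) (W : Submodule ℝ E) [FiniteDimensional ℝ W] :
    finrank ℝ (Submodule.map f W) + finrank ℝ (LinearMap.ker f ⊓ W : Submodule ℝ E)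
      = finrank ℝ W := by
  have h := LinearMap.finrank_range_add_finrank_ker (f.domRestrict W)
  rw [LinearMap.range_domRestrict, LinearMap.ker_domRestrict] at h
  have e : (Submodule.comap W.subtype (LinearMap.ker f)) ≃ₗ[ℝ]
      (LinearMap.ker f ⊓ W : Submodule ℝ E) := by
    have h1 : Submodule.comap W.subtype (LinearMap.ker f)
        = Submodule.comap W.subtype (LinearMap.ker f ⊓ W) := by
      rw [Submodule.comap_inf]
      simp [Submodule.comap_subtype_self]
    rw [h1]
    exact Submodule.comapSubtypeEquivOfLe inf_le_right
  rw [← h, e.finrank_eq]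

lemma finrank_finset_sup_le {E ι : Type*} [AddCommGroup E] [Module ℝ E] [FiniteDimensional ℝ E]
    (W : ι → Submodule ℝ E) (s : Finset ι) :
    finrank ℝ (s.sup W : Submodule ℝ E) ≤ ∑ i ∈ s, finrank ℝ (W i) := by
  classical
  induction s using Finset.induction_on with
  | empty => simp
  | @insert a s h ih =>
      rw [Finset.sup_insert, Finset.sum_insert h]
      exact le_trans (Submodule.finrank_add_le_finrank_add_finrank _ _)
        (by omega)

lemma sum_finrank_le_finrank_finset_sup {E ι : Type*} [AddCommGroup E] [Module ℝ E]
    [FiniteDimensional ℝ E] (W : ι → Submodule ℝ E) (hW : iSupIndep W) (s : Finset ι) :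
    ∑ i ∈ s, finrank ℝ (W i) ≤ finrank ℝ (s.sup W : Submodule ℝ E) := by
  classical
  induction s using Finset.induction_on with
  | empty => simp
  | @insert a s h ih =>
      rw [Finset.sup_insert, Finset.sum_insert h]
      have hdisj : Disjoint (W a) (s.sup W) := by
        refine (hW a).mono_right ?_
        refine Finset.sup_le fun j hj => ?_
        exact le_iSup₂ (f := fun j (_ : j ≠ a) => W j) j (fun hja => h (hja ▸ hj))
      have := Submodule.finrank_sup_add_finrank_inf_eq (W a) (s.sup W)
      rw [hdisj.eq_bot] at this
      simp only [finrank_bot, add_zero] at this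
      omega


/-- If a decomposition of a reaction network is independent, then the network deficiency
is at most the sum of the subnetwork deficiencies: `δ ≤ δ₁ + ... + δ_k`. -/
theorem stmt_11 (m n r k : ℕ) (Y : Matrix (Fin m) (Fin n) ℝ)
    (c : Fin r → (Fin n → ℝ)) (p : Fin r → Fin k)
    (hindep : IsIndepDecomp Y c p) :
    netDef Y c ≤ ∑ i, subDef Y c p i := by
  classical
  obtain ⟨hind, hsum⟩ := hindep
  set S := Submodule.span ℝ (Set.range c) with hSdef
  have hS : (⨆ i, incImage c p i) = S := by
    simp only [incImage, ← Submodule.span_iUnion, hSdef]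
    rw [← Set.image_iUnion]
    congr 1
    ext j
    simp
  have h1 : Module.finrank ℝ (Submodule.map Y.mulVecLin S) + netDef Y c
      = Module.finrank ℝ S := rankNull Y.mulVecLin S
  have h2 : ∀ i, Module.finrank ℝ (stoSub Y c p i) + subDef Y c p i
      = Module.finrank ℝ (incImage c p i) :=
    fun i => rankNull Y.mulVecLin (incImage c p i)
  have h3 : Module.finrank ℝ S ≤ ∑ i, Module.finrank ℝ (incImage c p i) := by
    rw [← hS, ← Finset.sup_univ_eq_iSup]
    exact finrank_finset_sup_le _ _
  have h4 : ∑ i, Module.finrank ℝ (stoSub Y c p i)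
      ≤ Module.finrank ℝ (Submodule.map Y.mulVecLin S) := by
    rw [← hsum, ← Finset.sup_univ_eq_iSup]
    exact sum_finrank_le_finrank_finset_sup _ hind _
  have h5 : ∑ i, Module.finrank ℝ (incImage c p i)
      = ∑ i, Module.finrank ℝ (stoSub Y c p i) + ∑ i, subDef Y c p i := by
    rw [← Finset.sum_add_distrib]
    exact Finset.sum_congr rfl (fun i _ => (h2 i).symm)
  omega
end

section
/- If a decomposition of a reaction network is incidence-independent, then the deficiency of the network is at least the sum of the deficiencies of the subnetworks: δ ≥ δ_1 + ... + δ_k. -/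
/-- If a decomposition of a reaction network is incidence-independent, then the network
deficiency is at least the sum of the subnetwork deficiencies: `δ ≥ δ₁ + ... + δ_k`. -/
theorem stmt_12 (m n r k : ℕ) (Y : Matrix (Fin m) (Fin n) ℝ)
    (c : Fin r → (Fin n → ℝ)) (p : Fin r → Fin k)
    (hinc : IsIncIndepDecomp c p) :
    ∑ i, subDef Y c p i ≤ netDef Y c := by
  classical
  set S : Fin k → Submodule ℝ (Fin n → ℝ) :=
    fun i => LinearMap.ker Y.mulVecLin ⊓ incImage c p i with hS
  have hSle : ∀ i, S i ≤ incImage c p i := fun i => inf_le_right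
  have hind : iSupIndep S := hinc.1.mono hSle
  set T : Submodule ℝ (Fin n → ℝ) :=
    LinearMap.ker Y.mulVecLin ⊓ Submodule.span ℝ (Set.range c) with hT
  have hSsupT : (⨆ i, S i) ≤ T := by
    refine iSup_le fun i => le_inf inf_le_left ?_
    refine le_trans (hSle i) ?_
    rw [← hinc.2]
    exact le_iSup _ i
  open DirectSum in
  let Φ : (⨁ i, S i) →ₗ[ℝ] (Fin n → ℝ) := DirectSum.coeLinearMap S
  have hΦinj : Function.Injective Φ := by
    show Function.Injective ⇑((DFinsupp.lsum ℕ) fun i => (S i).subtype)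
    exact hind.dfinsupp_lsum_injective
  have hΦrange : LinearMap.range Φ ≤ T := by
    rw [DirectSum.range_coeLinearMap]
    exact hSsupT
  let Ψ : (⨁ i, S i) →ₗ[ℝ] T := Φ.codRestrict T fun x => hΦrange ⟨x, rfl⟩
  have hΨinj : Function.Injective Ψ := by
    intro x y h
    apply hΦinj
    exact congrArg Subtype.val h
  have h1 : Module.finrank ℝ (⨁ i, S i) ≤ Module.finrank ℝ T :=
    LinearMap.finrank_le_finrank_of_injective hΨinj
  have h2 : Module.finrank ℝ (⨁ i, S i) = ∑ i, Module.finrank ℝ (S i) :=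
    Module.finrank_directSum ℝ _
  simpa [netDef, subDef, h2] using h1
end

section
/- Every deficiency zero reaction network is an FDE network: its finest independent decomposition coincides with its finest incidence-independent decomposition. -/
/-- `q` is a coarsening of `p`: every block of `p` is contained in a block of `q`. -/
def Coarsens {r : ℕ} (q p : Fin r → Fin r) : Prop :=
  ∀ j j' : Fin r, p j = p j' → q j = q j'

/-- `fid` is the finest independent decomposition. -/
def IsFID {m n r : ℕ} (Y : Matrix (Fin m) (Fin n) ℝ) (c : Fin r → (Fin n → ℝ))
    (fid : Fin r → Fin r) : Prop :=
  IsIndepDecomp Y c fid ∧ ∀ p : Fin r → Fin r, IsIndepDecomp Y c p → Coarsens p fid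

/-- `fiid` is the finest incidence-independent decomposition. -/
def IsFIID {n r : ℕ} (c : Fin r → (Fin n → ℝ)) (fiid : Fin r → Fin r) : Prop :=
  IsIncIndepDecomp c fiid ∧ ∀ p : Fin r → Fin r, IsIncIndepDecomp c p → Coarsens p fiid

lemma incImage_le_span {n r k : ℕ} (c : Fin r → (Fin n → ℝ)) (p : Fin r → Fin k) (i : Fin k) :
    incImage c p i ≤ Submodule.span ℝ (Set.range c) :=
  Submodule.span_mono (by rintro x ⟨j, _, rfl⟩; exact ⟨j, rfl⟩)

lemma iSup_incImage {n r k : ℕ} (c : Fin r → (Fin n → ℝ)) (p : Fin r → Fin k) :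
    (⨆ i, incImage c p i) = Submodule.span ℝ (Set.range c) := by
  have hset : Set.range c = ⋃ i, c '' {j | p j = i} := by
    ext x
    simp only [Set.mem_range, Set.mem_iUnion, Set.mem_image, Set.mem_setOf_eq]
    constructor
    · rintro ⟨j, rfl⟩; exact ⟨p j, j, rfl, rfl⟩
    · rintro ⟨i, j, _, rfl⟩; exact ⟨j, rfl⟩
  rw [hset, Submodule.span_iUnion]
  rfl

lemma indep_iff_incIndep {m n r k : ℕ} (Y : Matrix (Fin m) (Fin n) ℝ)
    (c : Fin r → (Fin n → ℝ)) (p : Fin r → Fin k)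
    (hker : LinearMap.ker Y.mulVecLin ⊓ Submodule.span ℝ (Set.range c) = ⊥) :
    IsIndepDecomp Y c p ↔ IsIncIndepDecomp c p := by
  have hmap : ∀ i : Fin k,
      (⨆ j ≠ i, stoSub Y c p j) = Submodule.map Y.mulVecLin (⨆ j ≠ i, incImage c p j) := by
    intro i
    simp [stoSub, Submodule.map_iSup]
  have hle : ∀ i : Fin k, (⨆ j ≠ i, incImage c p j) ≤ Submodule.span ℝ (Set.range c) := by
    intro i
    exact iSup₂_le fun j _ => incImage_le_span c p j
  constructor
  · rintro ⟨hind, -⟩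
    refine ⟨?_, iSup_incImage c p⟩
    intro i
    rw [Submodule.disjoint_def]
    intro x hxi hxs
    have h1 : Y.mulVecLin x ∈ stoSub Y c p i := Submodule.mem_map_of_mem hxi
    have h2 : Y.mulVecLin x ∈ ⨆ j ≠ i, stoSub Y c p j := by
      rw [hmap i]; exact Submodule.mem_map_of_mem hxs
    have h0 : Y.mulVecLin x = 0 := Submodule.disjoint_def.mp (hind i) _ h1 h2
    have hx : x ∈ LinearMap.ker Y.mulVecLin ⊓ Submodule.span ℝ (Set.range c) :=
      ⟨h0, incImage_le_span c p i hxi⟩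
    simpa [hker] using hx
  · rintro ⟨hind, -⟩
    constructor
    · intro i
      rw [Submodule.disjoint_def]
      intro y hy1 hy2
      rcases hy1 with ⟨a, ha, rfl⟩
      rw [hmap i] at hy2
      rcases hy2 with ⟨b, hb, hab⟩
      have hsub : a - b ∈ LinearMap.ker Y.mulVecLin ⊓ Submodule.span ℝ (Set.range c) := by
        refine ⟨?_, Submodule.sub_mem _ (incImage_le_span c p i ha) (hle i hb)⟩
        simp [LinearMap.mem_ker, map_sub, hab]
      have heq : a = b := by
        have h0 : a - b = 0 := by
          rw [hker] at hsub
          simpa using hsub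
        exact sub_eq_zero.mp h0
      have ha0 : a = 0 := Submodule.disjoint_def.mp (hind i) a ha (heq ▸ hb)
      simp [ha0]
    · rw [show (⨆ i, stoSub Y c p i) = Submodule.map Y.mulVecLin (⨆ i, incImage c p i) by
        simp [stoSub, Submodule.map_iSup], iSup_incImage]

/-- Every deficiency zero reaction network is an FDE network: its finest independent
decomposition coincides (as a partition of the reaction set) with its finest
incidence-independent decomposition. -/
theorem stmt_14 (m n r : ℕ) (Y : Matrix (Fin m) (Fin n) ℝ)
    (c : Fin r → (Fin n → ℝ)) (fid fiid : Fin r → Fin r)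
    (hfid : IsFID Y c fid) (hfiid : IsFIID c fiid)
    (hdef : netDef Y c = 0) :
    ∀ j j' : Fin r, fid j = fid j' ↔ fiid j = fiid j' := by
  have hker : LinearMap.ker Y.mulVecLin ⊓ Submodule.span ℝ (Set.range c) = ⊥ :=
    Submodule.finrank_eq_zero.mp hdef
  have h1 : IsIndepDecomp Y c fiid := (indep_iff_incIndep Y c fiid hker).mpr hfiid.1
  have h2 : IsIncIndepDecomp c fid := (indep_iff_incIndep Y c fid hker).mp hfid.1
  have c1 : Coarsens fiid fid := hfid.2 fiid h1
  have c2 : Coarsens fid fiid := hfiid.2 fid h2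
  exact fun j j' => ⟨c1 j j', c2 j j'⟩
end

section
/- In a deficiency zero reaction network, a decomposition is independent with all subnetworks of deficiency zero if and only if it is incidence-independent, and both are equivalent to being bi-independent. -/
section Aux
variable {α β : Type*} [AddCommGroup α] [AddCommGroup β] [Module ℝ α] [Module ℝ β]
variable (f : α →ₗ[ℝ] β) {T : Submodule ℝ α}

lemma aux_map_le_iff (hd : Disjoint (LinearMap.ker f) T) {A B : Submodule ℝ α}
    (hA : A ≤ T) (hB : B ≤ T) : A.map f ≤ B.map f ↔ A ≤ B := by
  constructor
  · intro h x hx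
    obtain ⟨b, hb, hfb⟩ := h (Submodule.mem_map_of_mem hx)
    have hxb : x - b ∈ LinearMap.ker f ⊓ T := by
      refine ⟨?_, T.sub_mem (hA hx) (hB hb)⟩
      simp [LinearMap.mem_ker, map_sub, hfb]
    rw [disjoint_iff.mp hd, Submodule.mem_bot, sub_eq_zero] at hxb
    exact hxb ▸ hb
  · exact Submodule.map_mono

lemma aux_map_inj (hd : Disjoint (LinearMap.ker f) T) {A B : Submodule ℝ α}
    (hA : A ≤ T) (hB : B ≤ T) (h : A.map f = B.map f) : A = B :=
  le_antisymm ((aux_map_le_iff f hd hA hB).mp h.le)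
    ((aux_map_le_iff f hd hB hA).mp h.ge)

lemma aux_disjoint_map (hd : Disjoint (LinearMap.ker f) T) {A B : Submodule ℝ α}
    (hA : A ≤ T) (hB : B ≤ T) : Disjoint (A.map f) (B.map f) ↔ Disjoint A B := by
  rw [disjoint_iff, disjoint_iff]
  constructor
  · intro h
    rw [eq_bot_iff]
    intro x hx
    have hfx : f x ∈ A.map f ⊓ B.map f :=
      ⟨Submodule.mem_map_of_mem hx.1, Submodule.mem_map_of_mem hx.2⟩
    rw [h, Submodule.mem_bot] at hfx
    have hx0 : x ∈ LinearMap.ker f ⊓ T := ⟨hfx, hA hx.1⟩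
    rw [disjoint_iff.mp hd] at hx0
    exact hx0
  · intro h
    rw [eq_bot_iff]
    rintro y ⟨⟨a, ha, rfl⟩, b, hb, hfb⟩
    have hab : b - a ∈ LinearMap.ker f ⊓ T := by
      refine ⟨?_, T.sub_mem (hB hb) (hA ha)⟩
      simp [LinearMap.mem_ker, map_sub, hfb]
    rw [disjoint_iff.mp hd, Submodule.mem_bot, sub_eq_zero] at hab
    have hmem : a ∈ A ⊓ B := ⟨ha, hab ▸ hb⟩
    rw [h, Submodule.mem_bot] at hmem
    simp [hmem]

end Aux

lemma key_iff {m n r k : ℕ} (Y : Matrix (Fin m) (Fin n) ℝ) (c : Fin r → (Fin n → ℝ))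
    (p : Fin r → Fin k)
    (hd : Disjoint (LinearMap.ker Y.mulVecLin) (Submodule.span ℝ (Set.range c))) :
    IsIndepDecomp Y c p ↔ IsIncIndepDecomp c p := by
  set f := Y.mulVecLin with hf
  set T := Submodule.span ℝ (Set.range c) with hT
  have hVT : ∀ i, incImage c p i ≤ T := fun i =>
    Submodule.span_mono (Set.image_subset_range c _)
  have hSupT : ∀ i : Fin k, (⨆ j ≠ i, incImage c p j) ≤ T :=
    fun i => iSup₂_le fun j _ => hVT j
  have hSup : (⨆ i, incImage c p i) ≤ T := iSup_le hVT
  have hsto : stoSub Y c p = fun i => (incImage c p i).map f := rfl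
  constructor
  · rintro ⟨hind, hsup⟩
    constructor
    · intro i
      have h1 := hind i
      rw [hsto] at h1
      have h2 : Disjoint ((incImage c p i).map f)
          ((⨆ j ≠ i, incImage c p j).map f) := by
        simpa [Submodule.map_iSup] using h1
      exact (aux_disjoint_map f hd (hVT i) (hSupT i)).mp h2
    · have h3 : ((⨆ i, incImage c p i).map f) = T.map f := by
        rw [hsto] at hsup
        simpa [Submodule.map_iSup] using hsup
      exact aux_map_inj f hd hSup le_rfl h3
  · rintro ⟨hind, hsup⟩
    constructor
    · intro i
      rw [hsto]
      have h2 := (aux_disjoint_map f hd (hVT i) (hSupT i)).mpr (hind i)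
      simpa [Submodule.map_iSup] using h2
    · rw [hsto]
      simp only [← Submodule.map_iSup, hsup]
      rfl

/-- In a deficiency zero reaction network, a decomposition is independent with all
subnetworks of deficiency zero (a ZDD) iff it is incidence-independent, and both are
equivalent to being bi-independent. -/
theorem stmt_15 (m n r k : ℕ) (Y : Matrix (Fin m) (Fin n) ℝ)
    (c : Fin r → (Fin n → ℝ)) (p : Fin r → Fin k)
    (hdef : netDef Y c = 0) :
    ((IsIndepDecomp Y c p ∧ ∀ i, subDef Y c p i = 0) ↔ IsIncIndepDecomp c p) ∧
    ((IsIndepDecomp Y c p ∧ ∀ i, subDef Y c p i = 0) ↔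
      (IsIndepDecomp Y c p ∧ IsIncIndepDecomp c p)) := by
  have hd : Disjoint (LinearMap.ker Y.mulVecLin) (Submodule.span ℝ (Set.range c)) := by
    rw [disjoint_iff]
    exact Submodule.finrank_eq_zero.mp hdef
  have hVT : ∀ i, incImage c p i ≤ Submodule.span ℝ (Set.range c) := fun i =>
    Submodule.span_mono (Set.image_subset_range c _)
  have hsub : ∀ i, subDef Y c p i = 0 := by
    intro i
    have hb : LinearMap.ker Y.mulVecLin ⊓ incImage c p i = ⊥ :=
      le_bot_iff.mp ((inf_le_inf_left _ (hVT i)).trans (disjoint_iff.mp hd).le)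
    simp [subDef, hb]
  have hk := key_iff Y c p hd
  exact ⟨⟨fun h => hk.mp h.1, fun h => ⟨hk.mpr h, hsub⟩⟩,
    ⟨fun h => ⟨h.1, hk.mp h.1⟩, fun h => ⟨h.1, hsub⟩⟩⟩
end

section
/- Any C-decomposition of a reaction network (a decomposition whose subnetworks have pairwise disjoint complex sets) is incidence-independent; more generally any decomposition whose subnetworks share at most one common complex in total is incidence-independent. -/
/-- Functions vanishing outside a set, as a submodule. -/
def suppIn (n : ℕ) (s : Set (Fin n)) : Submodule ℝ (Fin n → ℝ) where
  carrier := {x | ∀ a, a ∉ s → x a = 0}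
  add_mem' := by intro x y hx hy a ha; simp [hx a ha, hy a ha]
  zero_mem' := by intro a ha; rfl
  smul_mem' := by intro c x hx a ha; simp [hx a ha]

/-- Any decomposition of a reaction network whose subnetworks share at most one common
complex in total (so in particular any C-decomposition, where the complex sets are pairwise
disjoint) is incidence-independent: the images of the subnetwork incidence matrices form a
direct sum. Here the incidence column of reaction `j` is `e_{product j} - e_{reactant j}`,
the complex set of subnetwork `i` is the set of complexes occurring in its reactions, and
the set of common complexes is `CC = ⋃_{i ≠ i'} (C i ∩ C i')`. -/
theorem stmt_19 (n r k : ℕ) (reactant product : Fin r → Fin n) (p : Fin r → Fin k)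
    (hCC : Set.Subsingleton {x : Fin n | ∃ i i' : Fin k, i ≠ i' ∧
      (∃ j, p j = i ∧ (reactant j = x ∨ product j = x)) ∧
      (∃ j, p j = i' ∧ (reactant j = x ∨ product j = x))}) :
    iSupIndep (fun i : Fin k => Submodule.span ℝ
      ((fun j => (Pi.single (product j) 1 - Pi.single (reactant j) 1 : Fin n → ℝ)) ''
        {j | p j = i})) := by
  set C : Fin k → Set (Fin n) :=
    fun i => {x | ∃ j, p j = i ∧ (reactant j = x ∨ product j = x)} with hCdef
  set M : Fin k → Submodule ℝ (Fin n → ℝ) := fun i => Submodule.span ℝ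
      ((fun j => (Pi.single (product j) 1 - Pi.single (reactant j) 1 : Fin n → ℝ)) ''
        {j | p j = i}) with hMdef
  -- sum-of-coordinates linear map
  set S : (Fin n → ℝ) →ₗ[ℝ] ℝ := ∑ a : Fin n, LinearMap.proj a with hSdef
  have hMsupp : ∀ i, M i ≤ suppIn n (C i) := by
    intro i
    rw [hMdef, Submodule.span_le]
    rintro _ ⟨j, hj, rfl⟩
    intro a ha
    have h1 : a ≠ product j := fun h => ha ⟨j, hj, Or.inr h.symm⟩
    have h2 : a ≠ reactant j := fun h => ha ⟨j, hj, Or.inl h.symm⟩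
    simp [Pi.single_eq_of_ne' h1.symm, Pi.single_eq_of_ne' h2.symm]
  have hMsum : ∀ i, M i ≤ LinearMap.ker S := by
    intro i
    rw [hMdef, Submodule.span_le]
    rintro _ ⟨j, hj, rfl⟩
    simp [hSdef, LinearMap.sum_apply, Finset.sum_sub_distrib, Finset.sum_pi_single]
  intro i
  rw [Submodule.disjoint_def]
  intro v hvi hvrest
  have hv1 : ∀ a, a ∉ C i → v a = 0 := hMsupp i hvi
  have hv2 : ∑ a, v a = 0 := by
    have := hMsum i hvi
    simpa [hSdef, LinearMap.sum_apply] using this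
  have hv3 : ∀ a, a ∉ (⋃ (j ≠ i), C j) → v a = 0 := by
    have hle : (⨆ (j) (_ : j ≠ i), M j) ≤ suppIn n (⋃ (j ≠ i), C j) := by
      apply iSup_le; intro j; apply iSup_le; intro hj
      refine le_trans (hMsupp j) ?_
      intro x hx a ha
      exact hx a (fun h => ha (Set.mem_iUnion₂.2 ⟨j, hj, h⟩))
    exact hle hvrest
  -- support of v lies in CC, hence subsingleton
  have hsupp : ∀ a, v a ≠ 0 → a ∈ {x : Fin n | ∃ i i' : Fin k, i ≠ i' ∧
      (∃ j, p j = i ∧ (reactant j = x ∨ product j = x)) ∧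
      (∃ j, p j = i' ∧ (reactant j = x ∨ product j = x))} := by
    intro a ha
    have hai : a ∈ C i := by by_contra h; exact ha (hv1 a h)
    have haU : a ∈ ⋃ (j ≠ i), C j := by by_contra h; exact ha (hv3 a h)
    obtain ⟨j, hji, haj⟩ := Set.mem_iUnion₂.1 haU
    exact ⟨i, j, hji.symm, hai, haj⟩
  funext a
  by_contra ha
  have key : ∀ b ∈ Finset.univ, b ≠ a → v b = 0 := by
    intro b _ hba
    by_contra hb
    exact hba (hCC (hsupp b hb) (hsupp a ha))
  have : ∑ b, v b = v a := Finset.sum_eq_single_of_mem a (Finset.mem_univ a) key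
  exact ha (by rw [← this, hv2]; rfl)
end
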